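/- Let X be a compact metric space and f : X → X a continuous map with the limit shadowing property. If f exhibits DC1 (in fact if f has at least one Li-Yorke pair) then h_top(f) > 0. -/

import Mathlib

open Metric Filter Set
open scoped Classical

section Defs

variable {X : Type*} [MetricSpace X]

/-- `(c i)_{i=0}^k` is a δ-chain of `f`. -/
def IsChain' (f : X → X) (δ : ℝ) (c : ℕ → X) (k : ℕ) : Prop :=
  ∀ i < k, dist (f (c i)) (c (i + 1)) ≤ δ

/-- The chain recurrent set of `f`. -/
def CR (f : X → X) : Set X :=
  {x | ∀ δ > 0, ∃ k > 0, ∃ c : ℕ → X, IsChain' f δ c k ∧ c 0 = x ∧ c k = x}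

/-- The chain relation `~` on `CR f`. -/
def ChainRel (f : X → X) (x y : X) : Prop :=
  ∀ δ > 0, ∃ m > 0, ∃ N > 0, ∀ n ≥ N,
    (∃ c : ℕ → X, IsChain' f δ c (m * n) ∧ (∀ i ≤ m * n, c i ∈ CR f) ∧
      c 0 = x ∧ c (m * n) = y) ∧
    (∃ c : ℕ → X, IsChain' f δ c (m * n) ∧ (∀ i ≤ m * n, c i ∈ CR f) ∧
      c 0 = y ∧ c (m * n) = x)

/-- Property* for a pair `(z, w)`, with cycles lying in `CR f`. -/
def PropertyStar (f : X → X) (z w : X) : Prop :=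
  ∃ r > 0, ∀ δ > 0, ∃ k > 0, ∃ c c' : ℕ → X,
    IsChain' f δ c k ∧ IsChain' f δ c' k ∧
    (∀ i ≤ k, c i ∈ CR f) ∧ (∀ i ≤ k, c' i ∈ CR f) ∧
    c 0 = z ∧ c k = z ∧ c' 0 = w ∧ c' k = w ∧
    ∀ i ≤ k, dist (c i) (c' i) > r

/-- Property* for a pair `(z, w)` (cycles not required to lie in `CR f`). -/
def PropertyStar' (f : X → X) (z w : X) : Prop :=
  ∃ r > 0, ∀ δ > 0, ∃ k > 0, ∃ c c' : ℕ → X,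
    IsChain' f δ c k ∧ IsChain' f δ c' k ∧
    c 0 = z ∧ c k = z ∧ c' 0 = w ∧ c' k = w ∧
    ∀ i ≤ k, dist (c i) (c' i) > r

/-- Omega-limit set of the point `(x, y)` under `f × f`. -/
def OmegaLimit2 (f : X → X) (x y : X) : Set (X × X) :=
  {p | ∃ φ : ℕ → ℕ, StrictMono φ ∧
    Tendsto (fun n => (f^[φ n] x, f^[φ n] y)) atTop (nhds p)}

/-- Omega-limit set of a point under `f`. -/
def OmegaLimit1 (f : X → X) (x : X) : Set X :=
  {p | ∃ φ : ℕ → ℕ, StrictMono φ ∧ Tendsto (fun n => f^[φ n] x) atTop (nhds p)}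

/-- `(x, y)` is a DC1-pair for `f`. -/
def DC1Pair (f : X → X) (x y : X) : Prop :=
  (∀ δ > 0, Filter.limsup (fun n : ℕ =>
      (((Finset.range n).filter fun i => dist (f^[i] x) (f^[i] y) < δ).card : ℝ) / n)
      Filter.atTop = 1) ∧
  (∃ δ₀ > 0, Filter.limsup (fun n : ℕ =>
      (((Finset.range n).filter fun i => dist (f^[i] x) (f^[i] y) > δ₀).card : ℝ) / n)
      Filter.atTop = 1)

/-- `f` exhibits distributional chaos of type 1. -/
def ExhibitsDC1 (f : X → X) : Prop :=
  ∃ S : Set X, ¬ S.Countable ∧ ∀ x ∈ S, ∀ y ∈ S, x ≠ y → DC1Pair f x y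

/-- `(x, y)` is a Li-Yorke pair for `f`. -/
def LiYorkePair (f : X → X) (x y : X) : Prop :=
  Filter.liminf (fun n => dist (f^[n] x) (f^[n] y)) Filter.atTop = 0 ∧
  Filter.limsup (fun n => dist (f^[n] x) (f^[n] y)) Filter.atTop > 0

/-- `(x, y)` is a proximal pair for `f`. -/
def ProximalPair (f : X → X) (x y : X) : Prop :=
  Filter.liminf (fun n => dist (f^[n] x) (f^[n] y)) Filter.atTop = 0

/-- `(x, y)` is a distal pair for `f`. -/
def DistalPair (f : X → X) (x y : X) : Prop :=
  0 < ⨅ n : ℕ, dist (f^[n] x) (f^[n] y)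

/-- `f` has the limit shadowing property. -/
def LimitShadowing (f : X → X) : Prop :=
  ∀ x : ℕ → X, Tendsto (fun i => dist (f (x i)) (x (i + 1))) atTop (nhds 0) →
    ∃ p : X, Tendsto (fun i => dist (f^[i] p) (x i)) atTop (nhds 0)

/-- The restriction of `f` to `CR f` has the shadowing property. -/
def ShadowingOnCR (f : X → X) : Prop :=
  ∀ ε > 0, ∃ δ > 0, ∀ x : ℕ → X, (∀ i, x i ∈ CR f) →
    (∀ i, dist (f (x i)) (x (i + 1)) ≤ δ) →
    ∃ p ∈ CR f, ∀ i, dist (f^[i] p) (x i) ≤ ε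

/-- Topological entropy of `f` relative to the cover `U`. -/
noncomputable def entropyOfCover (f : X → X) {ι : Type*} (U : ι → Set X) : ℝ :=
  Filter.limsup (fun n : ℕ =>
    Real.log ((sInf {m : ℕ | ∃ s : Finset (Fin n → ι), s.card = m ∧
      (⋃ g ∈ s, ⋂ i : Fin n, f^[(i : ℕ)] ⁻¹' U (g i)) = Set.univ} : ℕ) : ℝ) / n)
    Filter.atTop

/-- `(x, y)` is an entropy pair for `f`. -/
def EntropyPair (f : X → X) (x y : X) : Prop :=
  x ≠ y ∧ ∀ A B : Set X, IsClosed A → IsClosed B → x ∈ interior A → y ∈ interior B →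
    Disjoint A B → 0 < entropyOfCover f (fun b : Bool => if b then Aᶜ else Bᶜ)

end Defs

/-!
The ω-limit set `W` of a Li-Yorke pair `(x, y)` under `f × f` is internally chain transitive and
contains a diagonal point `(a, a)` together with a point `(b, c)` with `b ≠ c`. The coordinate
projections of `W` form a chain transitive set `Z` on which limit shadowing gives uniform finite
shadowing: otherwise ever finer unshadowable chains in `Z`, spliced together by connecting chains,
would form an asymptotic pseudo-orbit that no orbit traces. The two coordinates of a `δ`-loop of
`f × f` at `(a, a)` through `(b, c)` are `δ`-loops of `f` at `a`, of a common length `K`, that are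
`dist b c` apart at a common time. Shadowing the `2 ^ m` concatenations of `m` such loops yields
`2 ^ m` orbits which are pairwise `dist b c / 3`-separated before time `K * m`, so the entropy is
at least `log 2 / K`.
-/

open Function Topology Dynamics

theorem exists_mapClusterPt_of_mapClusterPt_comp {ι Y Z : Type*} [TopologicalSpace Y]
    [CompactSpace Y] [TopologicalSpace Z] [T2Space Z] {l : Filter ι} {u : ι → Y} {D : Y → Z}
    (hD : Continuous D) {r : Z} (hr : MapClusterPt r l (D ∘ u)) :
    ∃ p, MapClusterPt p l u ∧ D p = r := by
  set l' := l ⊓ comap (D ∘ u) (𝓝 r)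
  have : l'.NeBot := by
    rw [← map_neBot_iff (D ∘ u), Filter.push_pull, inf_comm]
    exact hr
  obtain ⟨p, -, hp⟩ := isCompact_univ.exists_mapClusterPt (f := l') (u := u) (by simp)
  refine ⟨p, hp.mono inf_le_left, ?_⟩
  have hDp : ClusterPt (D p) (map (D ∘ u) l') := hp.continuousAt_comp hD.continuousAt
  exact eq_of_nhds_neBot (hDp.mono (tendsto_comap.mono_left inf_le_right))

theorem mem_omegaLimit1_iff_mapClusterPt {Y : Type*} [MetricSpace Y] {g : Y → Y} {x₀ p : Y} :
    p ∈ OmegaLimit1 g x₀ ↔ MapClusterPt p atTop (fun n => g^[n] x₀) := by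
  refine ⟨fun ⟨φ, hφ, hp⟩ => hp.mapClusterPt.of_comp hφ.tendsto_atTop, fun hp => ?_⟩
  obtain ⟨φ, hφ, hp⟩ := hp.tendsto_subseq
  exact ⟨φ, hφ, hp⟩

section PairsOfOrbits

variable {X : Type*} [MetricSpace X] [CompactSpace X] {f : X → X} {x y : X}

theorem exists_mem_omegaLimit1_prodMap_dist_eq {r : ℝ}
    (hr : MapClusterPt r atTop fun n => dist (f^[n] x) (f^[n] y)) :
    ∃ b c, (b, c) ∈ OmegaLimit1 (Prod.map f f) (x, y) ∧ dist b c = r := by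
  obtain ⟨⟨b, c⟩, hp, hbc⟩ := exists_mapClusterPt_of_mapClusterPt_comp
    (u := fun n => (Prod.map f f)^[n] (x, y)) (continuous_fst.dist continuous_snd)
    (by simpa [comp_def, Prod.map_iterate] using hr)
  exact ⟨b, c, mem_omegaLimit1_iff_mapClusterPt.2 hp, hbc⟩

theorem isBoundedUnder_dist_iterate :
    IsBoundedUnder (· ≤ ·) atTop fun n => dist (f^[n] x) (f^[n] y) :=
  isBoundedUnder_of ⟨diam (univ : Set X), fun _ => dist_le_diam_of_mem isBounded_of_compactSpace
    (mem_univ _) (mem_univ _)⟩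

theorem ProximalPair.exists_mem_omegaLimit1_diag (h : ProximalPair f x y) :
    ∃ a, (a, a) ∈ OmegaLimit1 (Prod.map f f) (x, y) := by
  have hcl := MapClusterPt.liminf (f := atTop) (u := fun n => dist (f^[n] x) (f^[n] y))
    isBoundedUnder_dist_iterate.isCoboundedUnder_ge (isBoundedUnder_of ⟨0, fun _ => dist_nonneg⟩)
  rw [h] at hcl
  obtain ⟨a, b, hab, hd⟩ := exists_mem_omegaLimit1_prodMap_dist_eq hcl
  exact ⟨a, dist_eq_zero.1 hd ▸ hab⟩

theorem LiYorkePair.exists_mem_omegaLimit1_ne (h : LiYorkePair f x y) :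
    ∃ b c, (b, c) ∈ OmegaLimit1 (Prod.map f f) (x, y) ∧ b ≠ c := by
  have hcl := MapClusterPt.limsup (f := atTop) (u := fun n => dist (f^[n] x) (f^[n] y))
    (isBoundedUnder_of ⟨0, fun _ => dist_nonneg⟩).isCoboundedUnder_le isBoundedUnder_dist_iterate
  obtain ⟨b, c, hbc, hd⟩ := exists_mem_omegaLimit1_prodMap_dist_eq hcl
  exact ⟨b, c, hbc, dist_pos.1 (hd ▸ h.2)⟩

end PairsOfOrbits

section ChainAppend

variable {X : Type*} {c d : ℕ → X} {n m : ℕ}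

def chainAppend (c d : ℕ → X) (n i : ℕ) : X := if i < n then c i else d (i - n)

theorem chainAppend_of_lt {i : ℕ} (hi : i < n) : chainAppend c d n i = c i := if_pos hi

theorem chainAppend_add (i : ℕ) : chainAppend c d n (n + i) = d i := by
  simp [chainAppend]

theorem chainAppend_of_le (h : c n = d 0) {i : ℕ} (hi : i ≤ n) : chainAppend c d n i = c i := by
  rcases hi.lt_or_eq with hi | rfl
  · exact chainAppend_of_lt hi
  · simpa [h] using chainAppend_add (c := c) (d := d) (n := i) 0

theorem chainAppend_mem {Z : Set X} (hc : ∀ i ≤ n, c i ∈ Z) (hd : ∀ i ≤ m, d i ∈ Z) {i : ℕ}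
    (hi : i ≤ n + m) : chainAppend c d n i ∈ Z := by
  unfold chainAppend
  split_ifs with h
  · exact hc i h.le
  · exact hd _ (by omega)

end ChainAppend

section Chains

variable {X Y : Type*} [MetricSpace X] [MetricSpace Y] {f : X → X} {δ : ℝ} {c d : ℕ → X} {n m : ℕ}

def ChainJoinedIn (f : X → X) (Z : Set X) (δ : ℝ) (u v : X) : Prop :=
  ∃ L > 0, ∃ c : ℕ → X, IsChain' f δ c L ∧ (∀ i ≤ L, c i ∈ Z) ∧ c 0 = u ∧ c L = v

def IsChainTransitiveOn (f : X → X) (Z : Set X) : Prop :=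
  ∀ u ∈ Z, ∀ v ∈ Z, ∀ δ > 0, ChainJoinedIn f Z δ u v

theorem IsChain'.append (hc : IsChain' f δ c n) (hd : IsChain' f δ d m) (h : c n = d 0) :
    IsChain' f δ (chainAppend c d n) (n + m) := by
  intro i hi
  rcases lt_or_ge i n with hin | hin
  · rw [chainAppend_of_lt hin, chainAppend_of_le h hin]
    exact hc i hin
  · obtain ⟨j, rfl⟩ := Nat.exists_eq_add_of_le hin
    rw [chainAppend_add, add_assoc, chainAppend_add]
    exact hd j (by omega)

theorem IsChain'.map {g : Y → Y} {π : Y → X} (hπ : LipschitzWith 1 π) (hsc : Semiconj π g f)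
    {c : ℕ → Y} (hc : IsChain' g δ c n) : IsChain' f δ (π ∘ c) n := fun i hi => by
  simpa [← hsc (c i)] using (hπ.dist_le_mul (g (c i)) (c (i + 1))).trans (by simpa using hc i hi)

variable {Z Z' : Set X} {u v w : X}

theorem ChainJoinedIn.mono (h : ChainJoinedIn f Z δ u v) (hZ : Z ⊆ Z') :
    ChainJoinedIn f Z' δ u v :=
  let ⟨L, hL, c, hc, hcZ, hc0, hcL⟩ := h
  ⟨L, hL, c, hc, fun i hi => hZ (hcZ i hi), hc0, hcL⟩

theorem ChainJoinedIn.trans (h₁ : ChainJoinedIn f Z δ u v) (h₂ : ChainJoinedIn f Z δ v w) :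
    ChainJoinedIn f Z δ u w := by
  obtain ⟨L, hL, c, hc, hcZ, hc0, hcL⟩ := h₁
  obtain ⟨M, -, d, hd, hdZ, hd0, hdM⟩ := h₂
  have hlink : c L = d 0 := hcL.trans hd0.symm
  exact ⟨L + M, by omega, chainAppend c d L, hc.append hd hlink,
    fun i hi => chainAppend_mem hcZ hdZ hi, (chainAppend_of_le hlink (Nat.zero_le L)).trans hc0,
    (chainAppend_add M).trans hdM⟩

theorem IsChainTransitiveOn.image {g : Y → Y} {W : Set Y} (hW : IsChainTransitiveOn g W)
    {π : Y → X} (hπ : LipschitzWith 1 π) (hsc : Semiconj π g f) :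
    IsChainTransitiveOn f (π '' W) := by
  rintro _ ⟨u, hu, rfl⟩ _ ⟨v, hv, rfl⟩ δ hδ
  obtain ⟨L, hL, c, hc, hcW, hc0, hcL⟩ := hW u hu v hv δ hδ
  exact ⟨L, hL, π ∘ c, hc.map hπ hsc, fun i hi => mem_image_of_mem π (hcW i hi),
    congrArg π hc0, congrArg π hcL⟩

theorem IsChainTransitiveOn.union {Z₁ Z₂ : Set X} (h₁ : IsChainTransitiveOn f Z₁)
    (h₂ : IsChainTransitiveOn f Z₂) {a : X} (ha₁ : a ∈ Z₁) (ha₂ : a ∈ Z₂) :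
    IsChainTransitiveOn f (Z₁ ∪ Z₂) := by
  intro u hu v hv δ hδ
  have hto : ChainJoinedIn f (Z₁ ∪ Z₂) δ u a := by
    rcases hu with hu | hu
    exacts [(h₁ u hu a ha₁ δ hδ).mono subset_union_left,
      (h₂ u hu a ha₂ δ hδ).mono subset_union_right]
  have hfrom : ChainJoinedIn f (Z₁ ∪ Z₂) δ a v := by
    rcases hv with hv | hv
    exacts [(h₁ a ha₁ v hv δ hδ).mono subset_union_left,
      (h₂ a ha₂ v hv δ hδ).mono subset_union_right]
  exact hto.trans hfrom

end Chains

section OmegaLimitChains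

variable {X : Type*} [MetricSpace X] [CompactSpace X] {f : X → X}

theorem exists_isChain'_of_dist_iterate_lt (hf : Continuous f) {δ : ℝ} (hδ : 0 < δ) :
    ∃ η > 0, ∀ (x : X) (c : ℕ → X) (n : ℕ),
      (∀ i ≤ n, dist (f^[i] x) (c i) < η) → IsChain' f δ c n := by
  obtain ⟨η, hη, hfη⟩ := Metric.uniformContinuous_iff.1
    (CompactSpace.uniformContinuous_of_continuous hf) (δ / 2) (half_pos hδ)
  refine ⟨min η (δ / 2), lt_min hη (half_pos hδ), fun x c n hc i hi => ?_⟩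
  have h₁ : dist (f (c i)) (f^[i + 1] x) < δ / 2 := by
    rw [Function.iterate_succ_apply']
    exact hfη (dist_comm (f^[i] x) (c i) ▸ (hc i hi.le).trans_le (min_le_left _ _))
  have h₂ : dist (f^[i + 1] x) (c (i + 1)) < δ / 2 := (hc (i + 1) hi).trans_le (min_le_right _ _)
  linarith [dist_triangle (f (c i)) (f^[i + 1] x) (c (i + 1))]

theorem eventually_exists_mem_omegaLimit1_dist_lt (x₀ : X) {η : ℝ} (hη : 0 < η) :
    ∀ᶠ n in atTop, ∃ w ∈ OmegaLimit1 f x₀, dist (f^[n] x₀) w < η := by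
  by_contra h
  have hfar : ∃ᶠ n in atTop, f^[n] x₀ ∈ ⋂ w ∈ OmegaLimit1 f x₀, {p | η ≤ dist p w} :=
    (not_eventually.1 h).mono fun n hn => by simpa using hn
  have hclosed : IsClosed (⋂ w ∈ OmegaLimit1 f x₀, {p | η ≤ dist p w}) :=
    isClosed_biInter fun w _ => isClosed_le continuous_const (continuous_id.dist continuous_const)
  obtain ⟨p, hp, hpω⟩ := hclosed.isCompact.exists_mapClusterPt_of_frequently hfar
  have hpp : η ≤ dist p p := mem_iInter₂.1 hp p (mem_omegaLimit1_iff_mapClusterPt.2 hpω)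
  exact hpp.not_gt (by simpa using hη)

theorem isChainTransitiveOn_omegaLimit1 (hf : Continuous f) (x₀ : X) :
    IsChainTransitiveOn f (OmegaLimit1 f x₀) := by
  intro u hu v hv δ hδ
  obtain ⟨η, hη, hchain⟩ := exists_isChain'_of_dist_iterate_lt hf hδ
  obtain ⟨N, hN⟩ := eventually_atTop.1 (eventually_exists_mem_omegaLimit1_dist_lt x₀ hη)
  have hvisits : ∀ w ∈ OmegaLimit1 f x₀, ∀ N, ∃ n ≥ N, dist (f^[n] x₀) w < η := fun w hw =>
    frequently_atTop.1 ((mem_omegaLimit1_iff_mapClusterPt.1 hw).frequently (ball_mem_nhds w hη))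
  obtain ⟨n₁, hn₁, hu₁⟩ := hvisits u hu N
  obtain ⟨n₂, hn₂, hv₂⟩ := hvisits v hv (n₁ + 1)
  choose W hWω hWd using fun i => hN (n₁ + i) (by omega)
  set L := n₂ - n₁
  refine ⟨L, by omega, fun i => if i = 0 then u else if i = L then v else W i, hchain (f^[n₁] x₀)
    _ L fun i hi => ?_, fun i _ => ?_, rfl, by simp [show L ≠ 0 by omega]⟩
  · rw [← iterate_add_apply, add_comm]
    split_ifs with h₀ hL
    · simpa [h₀] using hu₁
    · simpa [hL, show n₁ + L = n₂ by omega] using hv₂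
    · exact hWd i
  · dsimp only
    split_ifs
    exacts [hu, hv, hWω i]

end OmegaLimitChains

section Concatenation

variable {X : Type*} {L : ℕ → ℕ}

/-- `blockIndex L i = (k, j)` when time `i` is the `j`-th step of the `k`-th block in the
concatenation of blocks of lengths `L 0, L 1, …` (each block's endpoint is the next one's start). -/
def blockIndex (L : ℕ → ℕ) : ℕ → ℕ × ℕ
  | 0 => (0, 0)
  | i + 1 =>
    if (blockIndex L i).2 + 1 < L (blockIndex L i).1 then
      ((blockIndex L i).1, (blockIndex L i).2 + 1)
    else ((blockIndex L i).1 + 1, 0)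

def concatBlocks (L : ℕ → ℕ) (c : ℕ → ℕ → X) (i : ℕ) : X :=
  c (blockIndex L i).1 (blockIndex L i).2

theorem blockIndex_snd_lt (hL : ∀ k, 0 < L k) (i : ℕ) :
    (blockIndex L i).2 < L (blockIndex L i).1 := by
  cases i with
  | zero => exact hL 0
  | succ i =>
    simp only [blockIndex]
    split_ifs with h
    exacts [h, hL _]

theorem blockIndex_sum_add_of_sum {k : ℕ} (hk : blockIndex L (∑ i ∈ Finset.range k, L i) = (k, 0))
    {j : ℕ} (hj : j < L k) : blockIndex L (∑ i ∈ Finset.range k, L i + j) = (k, j) := by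
  induction j with
  | zero => exact hk
  | succ j ih => simp [blockIndex, ih (by omega), hj]

theorem blockIndex_sum (hL : ∀ k, 0 < L k) (k : ℕ) :
    blockIndex L (∑ i ∈ Finset.range k, L i) = (k, 0) := by
  induction k with
  | zero => rfl
  | succ k ih =>
    have hlast := blockIndex_sum_add_of_sum ih (Nat.sub_one_lt (hL k).ne')
    rw [Finset.sum_range_succ, ← Nat.sub_add_cancel (hL k), ← add_assoc, blockIndex, hlast]
    simp [Nat.sub_add_cancel (hL k)]

theorem blockIndex_sum_add (hL : ∀ k, 0 < L k) {k j : ℕ} (hj : j < L k) :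
    blockIndex L (∑ i ∈ Finset.range k, L i + j) = (k, j) :=
  blockIndex_sum_add_of_sum (blockIndex_sum hL k) hj

theorem tendsto_blockIndex_fst (hL : ∀ k, 0 < L k) :
    Tendsto (fun i => (blockIndex L i).1) atTop atTop := by
  refine tendsto_atTop_atTop_of_monotone (monotone_nat_of_le_succ fun i => ?_) fun k =>
    ⟨∑ i ∈ Finset.range k, L i, by rw [blockIndex_sum hL]⟩
  simp only [blockIndex]
  split_ifs <;> simp

theorem concatBlocks_sum_add (hL : ∀ k, 0 < L k) (c : ℕ → ℕ → X) {k j : ℕ} (hj : j < L k) :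
    concatBlocks L c (∑ i ∈ Finset.range k, L i + j) = c k j := by
  simp [concatBlocks, blockIndex_sum_add hL hj]

theorem dist_concatBlocks_le [MetricSpace X] {f : X → X} {c : ℕ → ℕ → X} {δ : ℕ → ℝ}
    (hL : ∀ k, 0 < L k) (hc : ∀ k, IsChain' f (δ k) (c k) (L k))
    (hlink : ∀ k, c k (L k) = c (k + 1) 0) (i : ℕ) :
    dist (f (concatBlocks L c i)) (concatBlocks L c (i + 1)) ≤ δ (blockIndex L i).1 := by
  have hlt := blockIndex_snd_lt hL i
  simp only [concatBlocks, blockIndex]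
  split_ifs with h
  · exact hc _ _ hlt
  · rw [← hlink, show L (blockIndex L i).1 = (blockIndex L i).2 + 1 by omega]
    exact hc _ _ hlt

end Concatenation

section FiniteShadowing

variable {X : Type*} [MetricSpace X] {f : X → X}

theorem LimitShadowing.exists_shadowing_of_isChainTransitiveOn (h : LimitShadowing f) {Z : Set X}
    (hZ : IsChainTransitiveOn f Z) {ε : ℝ} (hε : 0 < ε) :
    ∃ δ > 0, ∀ (n : ℕ) (c : ℕ → X), (∀ i ≤ n, c i ∈ Z) → IsChain' f δ c n →
      ∃ p, ∀ i ≤ n, dist (f^[i] p) (c i) ≤ ε := by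
  by_contra! hcon
  choose n ξ hξZ hξ hbad using fun k : ℕ => hcon (1 / (k + 1)) Nat.one_div_pos_of_nat
  choose M hM d hd hdZ hd₀ hdM using fun k => hZ (ξ k (n k)) (hξZ k _ le_rfl) (ξ (k + 1) 0)
    (hξZ (k + 1) 0 (Nat.zero_le _)) (1 / (k + 1)) Nat.one_div_pos_of_nat
  -- the `k`-th bad chain followed by a connector to the `k + 1`-st one
  set B : ℕ → ℕ → X := fun k => chainAppend (ξ k) (d k) (n k)
  have hL : ∀ k, 0 < n k + M k := fun k => by have := hM k; omega
  have hB : ∀ k : ℕ, IsChain' f (1 / (k + 1)) (B k) (n k + M k) :=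
    fun k => (hξ k).append (hd k) (hd₀ k).symm
  have hlink : ∀ k, B k (n k + M k) = B (k + 1) 0 := fun k => by
    simp only [B, chainAppend_add, hdM, chainAppend_of_le (hd₀ (k + 1)).symm (Nat.zero_le _)]
  have hpseudo : Tendsto (fun i => dist (f (concatBlocks _ B i)) (concatBlocks _ B (i + 1)))
      atTop (𝓝 0) :=
    squeeze_zero (fun _ => dist_nonneg) (dist_concatBlocks_le hL hB hlink)
      (tendsto_one_div_add_atTop_nhds_zero_nat.comp (tendsto_blockIndex_fst hL))
  obtain ⟨p, hp⟩ := h _ hpseudo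
  obtain ⟨N, hN⟩ := eventually_atTop.1 (hp.eventually (gt_mem_nhds hε))
  set T := ∑ i ∈ Finset.range N, (n i + M i)
  have hNT : N ≤ T := by
    simpa using Finset.sum_le_sum fun i (_ : i ∈ Finset.range N) => Nat.succ_le_of_lt (hL i)
  obtain ⟨i, hi, hfar⟩ := hbad N (f^[T] p)
  have hclose := hN (T + i) (by omega)
  have hBξ : B N i = ξ N i := chainAppend_of_le (hd₀ N).symm hi
  rw [concatBlocks_sum_add hL B (by have := hM N; omega), hBξ, add_comm, iterate_add_apply]
    at hclose
  exact hfar.not_gt hclose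

end FiniteShadowing

section Entropy

open scoped ENNReal

variable {X : Type*} [MetricSpace X] {T : X → X}

theorem isDynNetIn_of_separated {ε : ℝ} {n : ℕ} {s : Set X}
    (hs : s.Pairwise fun x y => ∃ k < n, ε ≤ dist (T^[k] x) (T^[k] y)) :
    IsDynNetIn T univ {p | dist p.1 p.2 < ε / 2} n s := by
  refine ⟨subset_univ s, fun x hx y hy hxy => disjoint_left.2 fun z hxz hyz => ?_⟩
  obtain ⟨k, hk, hsep⟩ := hs hx hy hxy
  have hx' : dist (T^[k] x) (T^[k] z) < ε / 2 := mem_dynEntourage.1 hxz k hk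
  have hy' : dist (T^[k] y) (T^[k] z) < ε / 2 := mem_dynEntourage.1 hyz k hk
  linarith [dist_triangle_right (T^[k] x) (T^[k] y) (T^[k] z)]

theorem coverEntropy_pos_of_separated_words {ε : ℝ} (hε : 0 < ε) {K : ℕ} (hK : K ≠ 0)
    (h : ∀ m : ℕ, ∃ P : (Fin m → Bool) → X,
      Pairwise fun w w' => ∃ k < K * m, ε ≤ dist (T^[k] (P w)) (T^[k] (P w'))) :
    0 < coverEntropy T univ := by
  set U : SetRel X X := {p | dist p.1 p.2 < ε / 2}
  have hU : U ∈ uniformity X := dist_mem_uniformity (half_pos hε)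
  have hcard : ∀ m : ℕ, (2 : ℝ≥0∞) ^ m ≤ netMaxcard T univ U (K * m) := fun m => by
    obtain ⟨P, hP⟩ := h m
    have hinj : Injective P := fun w w' hww' => by
      by_contra hne
      obtain ⟨k, -, hk⟩ := hP hne
      rw [hww', dist_self] at hk
      exact hε.not_ge hk
    have hnet : IsDynNetIn T univ U (K * m) ↑(Finset.univ.image P) :=
      isDynNetIn_of_separated fun x hx y hy hxy => by
        obtain ⟨w, -, rfl⟩ := Finset.mem_image.1 hx
        obtain ⟨w', -, rfl⟩ := Finset.mem_image.1 hy
        exact hP fun hww' => hxy (congrArg P hww')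
    have := ENat.toENNReal_mono hnet.card_le_netMaxcard
    simpa [Finset.card_image_of_injective _ hinj] using this
  have hgrowth : ENNReal.log 2 ≤ K * netEntropyEntourage T univ U := by
    rw [← ExpGrowth.expGrowthSup_pow, netEntropyEntourage,
      ← Monotone.expGrowthSup_comp_mul _ hK]
    · exact ExpGrowth.expGrowthSup_monotone hcard
    · exact fun _ _ hmn => ENat.toENNReal_mono (netMaxcard_monotone_time T univ U hmn)
  have hpos : 0 < (K : EReal) * netEntropyEntourage T univ U :=
    (ENNReal.zero_lt_log_iff.2 (by norm_num)).trans_le hgrowth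
  rcases EReal.mul_pos_iff.1 hpos with ⟨-, he⟩ | ⟨hKneg, -⟩
  · exact he.trans_le (netEntropyEntourage_le_coverEntropy T univ hU)
  · exact absurd hKneg (by simp)

end Entropy

section Horseshoe

variable {X : Type*} [MetricSpace X] {f : X → X}

theorem coverEntropy_pos_of_shadowed_loops {Z : Set X} {δ ε : ℝ} (hε : 0 < ε)
    (hshadow : ∀ (n : ℕ) (c : ℕ → X), (∀ i ≤ n, c i ∈ Z) → IsChain' f δ c n →
      ∃ p, ∀ i ≤ n, dist (f^[i] p) (c i) ≤ ε)
    {K s : ℕ} {loop : Bool → ℕ → X} (hloop : ∀ t, IsChain' f δ (loop t) K)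
    (hloopZ : ∀ t, ∀ i ≤ K, loop t i ∈ Z) (hbase : ∀ t t', loop t K = loop t' 0) (hs : s < K)
    (hsep : ∀ t t', t ≠ t' → 3 * ε ≤ dist (loop t s) (loop t' s)) :
    0 < coverEntropy f univ := by
  have hK : ∀ _ : ℕ, 0 < K := fun _ => by omega
  refine coverEntropy_pos_of_separated_words hε (K := K) (by omega) fun m => ?_
  -- the pseudo-orbit running through the loops `loop (w 0), loop (w 1), …, loop (w (m - 1))`
  let word (w : Fin m → Bool) (j : ℕ) : Bool := if h : j < m then w ⟨j, h⟩ else true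
  let Ξ (w : Fin m → Bool) : ℕ → X := concatBlocks (fun _ => K) fun j => loop (word w j)
  have hΞ : ∀ w, IsChain' f δ (Ξ w) (K * m) := fun w i _ =>
    dist_concatBlocks_le (δ := fun _ => δ) hK (fun _ => hloop _) (fun _ => hbase _ _) i
  have hΞZ : ∀ w, ∀ i ≤ K * m, Ξ w i ∈ Z := fun w i _ =>
    hloopZ _ _ (blockIndex_snd_lt hK i).le
  have hΞs : ∀ w (j : Fin m), Ξ w (K * j + s) = loop (w j) s := fun w j => by
    simpa [word, mul_comm] using concatBlocks_sum_add hK (fun j => loop (word w j)) (k := j) hs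
  choose P hP using fun w => hshadow (K * m) (Ξ w) (hΞZ w) (hΞ w)
  refine ⟨P, fun w w' hne => ?_⟩
  obtain ⟨j, hj⟩ := Function.ne_iff.1 hne
  have hjm : K * j + s < K * m := by nlinarith [j.isLt]
  refine ⟨K * j + s, hjm, ?_⟩
  have h₁ := hP w _ hjm.le
  have h₂ := hP w' _ hjm.le
  rw [hΞs] at h₁ h₂
  linarith [hsep _ _ hj, dist_triangle4 (loop (w j) s) (f^[K * j + s] (P w))
    (f^[K * j + s] (P w')) (loop (w' j) s), dist_comm (loop (w j) s) (f^[K * j + s] (P w))]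

end Horseshoe

section Loops

variable {X : Type*} [MetricSpace X] {f : X → X}

theorem IsChainTransitiveOn.exists_loop {Z : Set X} (hZ : IsChainTransitiveOn f Z) {u v : X}
    (hu : u ∈ Z) (hv : v ∈ Z) {δ : ℝ} (hδ : 0 < δ) :
    ∃ K s : ℕ, s < K ∧ ∃ C : ℕ → X, IsChain' f δ C K ∧ (∀ i ≤ K, C i ∈ Z) ∧
      C 0 = u ∧ C K = u ∧ C s = v := by
  obtain ⟨s, -, C₁, hC₁, hC₁Z, hC₁0, hC₁s⟩ := hZ u hu v hv δ hδ
  obtain ⟨r, hr, C₂, hC₂, hC₂Z, hC₂0, hC₂r⟩ := hZ v hv u hu δ hδ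
  have hlink : C₁ s = C₂ 0 := hC₁s.trans hC₂0.symm
  exact ⟨s + r, s, by omega, chainAppend C₁ C₂ s, hC₁.append hC₂ hlink,
    fun i hi => chainAppend_mem hC₁Z hC₂Z hi, (chainAppend_of_le hlink (Nat.zero_le s)).trans hC₁0,
    (chainAppend_add r).trans hC₂r, (chainAppend_of_le hlink le_rfl).trans hC₁s⟩

theorem IsChainTransitiveOn.coverEntropy_pos_of_limitShadowing {W : Set (X × X)}
    (hW : IsChainTransitiveOn (Prod.map f f) W) (hf : LimitShadowing f) {a b c : X}
    (ha : (a, a) ∈ W) (hbc : (b, c) ∈ W) (hne : b ≠ c) : 0 < coverEntropy f univ := by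
  have hZ : IsChainTransitiveOn f (Prod.fst '' W ∪ Prod.snd '' W) :=
    (hW.image LipschitzWith.prod_fst fun _ => rfl).union
      (hW.image LipschitzWith.prod_snd fun _ => rfl) ⟨_, ha, rfl⟩ ⟨_, ha, rfl⟩
  obtain ⟨δ, hδ, hshadow⟩ :=
    hf.exists_shadowing_of_isChainTransitiveOn hZ (ε := dist b c / 3) (by simpa using hne)
  -- the two coordinates of a loop of `f × f` at `(a, a)` through `(b, c)` are the loops of `f`
  obtain ⟨K, s, hs, C, hC, hCW, hC0, hCK, hCs⟩ := hW.exists_loop ha hbc hδ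
  refine coverEntropy_pos_of_shadowed_loops (by simpa using hne) hshadow (s := s)
    (loop := fun t => if t then Prod.fst ∘ C else Prod.snd ∘ C) ?_ ?_ ?_ hs ?_
  · have hfst : IsChain' f δ (Prod.fst ∘ C) K :=
      hC.map (π := Prod.fst) LipschitzWith.prod_fst fun _ => rfl
    have hsnd : IsChain' f δ (Prod.snd ∘ C) K :=
      hC.map (π := Prod.snd) LipschitzWith.prod_snd fun _ => rfl
    rintro (_ | _)
    exacts [hsnd, hfst]
  · rintro (_ | _) i hi
    exacts [Or.inr ⟨_, hCW i hi, rfl⟩, Or.inl ⟨_, hCW i hi, rfl⟩]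
  · rintro (_ | _) (_ | _) <;> simp [hC0, hCK]
  · rintro (_ | _) (_ | _) h <;> simp_all [dist_comm] <;> linarith

end Loops

/-- with limit shadowing, a Li-Yorke pair (in particular DC1)
forces positive topological entropy. -/
theorem limitShadowing_liYorke_posEntropy {X : Type*} [MetricSpace X] [CompactSpace X]
    (f : X → X) (hf : Continuous f) (h1 : LimitShadowing f)
    (h2 : ∃ x y : X, LiYorkePair f x y) :
    0 < Dynamics.coverEntropy f Set.univ := by
  obtain ⟨x, y, hxy⟩ := h2
  obtain ⟨a, ha⟩ := ProximalPair.exists_mem_omegaLimit1_diag hxy.1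
  obtain ⟨b, c, hbc, hne⟩ := hxy.exists_mem_omegaLimit1_ne
  exact (isChainTransitiveOn_omegaLimit1 (hf.prodMap hf) (x, y)).coverEntropy_pos_of_limitShadowing
    h1 ha hbc hne
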